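/- Every real symmetric positive definite $2 \times 2$ matrix $Q$ with $q_{12} < 0$ can be transformed, by finitely many applications of the moves $Q \mapsto X_1^t Q X_1$ and $Q \mapsto X_2^t Q X_2$ with $X_1 = \begin{pmatrix}1&0\\1&1\end{pmatrix}$ and $X_2 = \begin{pmatrix}1&1\\0&1\end{pmatrix}$, into a matrix $Q'$ satisfying $q'_{12} \leq 0$, $q'_{11} + q'_{12} \geq 0$, and $q'_{22} + q'_{12} \geq 0$. -/

import Mathlib

/-!
Both moves have determinant one, so they preserve positive definiteness and the determinant `d`.
A move is only made when `q₁₂ < 0` and `q₁₁ + q₁₂ < 0` (resp. `q₂₂ + q₁₂ < 0`); the new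
off-diagonal entry is then again negative, and the trace drops by more than `q₁₁` (resp. `q₂₂`).
Since `q₁₁ q₂₂ ≥ d`, each diagonal entry is at least `d / tr Q`, and the trace never increases,
so every move lowers the trace by at least the fixed amount `d / tr Q₀`. A positive trace can only
drop by a fixed amount finitely often, so the process stops.
-/

open Matrix

theorem induction_of_decrease {α : Type*} {P : α → Prop} (f : α → ℝ) {ε : ℝ} (hε : 0 < ε)
    (h : ∀ x, (∀ y, 0 ≤ f y → f y ≤ f x - ε → P y) → P x) (x : α) : P x := by
  suffices ∀ n : ℕ, ∀ x, f x < n * ε → P x by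
    obtain ⟨n, hn⟩ := exists_nat_gt (f x / ε)
    exact this n x ((div_lt_iff₀ hε).mp hn)
  intro n
  induction n with
  | zero => exact fun x hx => h x fun y hy hyx => by push_cast at hx; linarith
  | succ n ih => exact fun x hx => h x fun y _ hyx => ih y (by push_cast at hx; linarith)

theorem Matrix.PosDef.transpose_mul_mul_of_isUnit_det {n : Type*} [Fintype n] [DecidableEq n]
    {Q X : Matrix n n ℝ} (hQ : Q.PosDef) (hX : IsUnit X.det) : (Xᵀ * Q * X).PosDef := by
  simpa only [conjTranspose_eq_transpose_of_trivial] using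
    hQ.conjTranspose_mul_mul_same (mulVec_injective_iff_isUnit.mpr ((isUnit_iff_isUnit_det X).mpr hX))

theorem Matrix.det_transpose_mul_mul_of_det_eq_one {n : Type*} [Fintype n] [DecidableEq n]
    {Q X : Matrix n n ℝ} (hX : X.det = 1) : (Xᵀ * Q * X).det = Q.det := by
  rw [det_mul, det_mul, det_transpose, hX, one_mul, mul_one]

theorem Matrix.PosDef.det_div_trace_le_diag {Q : Matrix (Fin 2) (Fin 2) ℝ} (hQ : Q.PosDef)
    (i : Fin 2) : Q.det / Q.trace ≤ Q i i := by
  have h00 : 0 < Q 0 0 := hQ.diag_pos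
  have h11 : 0 < Q 1 1 := hQ.diag_pos
  have hsymm : Q 1 0 = Q 0 1 := hQ.isHermitian.apply 0 1
  rw [div_le_iff₀ hQ.trace_pos]
  revert i
  rw [Fin.forall_fin_two, trace_fin_two, det_fin_two, hsymm]
  constructor <;> nlinarith

namespace Selling

abbrev X₁ : Matrix (Fin 2) (Fin 2) ℝ := !![1, 0; 1, 1]

abbrev X₂ : Matrix (Fin 2) (Fin 2) ℝ := !![1, 1; 0, 1]

def IsMove (X : Matrix (Fin 2) (Fin 2) ℝ) : Prop := X = X₁ ∨ X = X₂

def IsReduced (Q : Matrix (Fin 2) (Fin 2) ℝ) : Prop :=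
  Q 0 1 ≤ 0 ∧ 0 ≤ Q 0 0 + Q 0 1 ∧ 0 ≤ Q 1 1 + Q 0 1

def IsReducible (Q : Matrix (Fin 2) (Fin 2) ℝ) : Prop :=
  ∃ L : List (Matrix (Fin 2) (Fin 2) ℝ), (∀ M ∈ L, IsMove M) ∧ IsReduced (L.prodᵀ * Q * L.prod)

theorem IsMove.det_eq_one {X : Matrix (Fin 2) (Fin 2) ℝ} (hX : IsMove X) : X.det = 1 := by
  rcases hX with rfl | rfl <;> simp [det_fin_two]

theorem IsMove.isReducible_of_conj {Q X : Matrix (Fin 2) (Fin 2) ℝ} (hX : IsMove X)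
    (h : IsReducible (Xᵀ * Q * X)) : IsReducible Q := by
  obtain ⟨L, hL, hred⟩ := h
  refine ⟨X :: L, List.forall_mem_cons.mpr ⟨hX, hL⟩, ?_⟩
  simpa only [List.prod_cons, transpose_mul, Matrix.mul_assoc] using hred

theorem transpose_X₁_mul_mul (Q : Matrix (Fin 2) (Fin 2) ℝ) :
    X₁ᵀ * Q * X₁ = !![Q 0 0 + Q 1 0 + (Q 0 1 + Q 1 1), Q 0 1 + Q 1 1; Q 1 0 + Q 1 1, Q 1 1] := by
  ext i j
  fin_cases i <;> fin_cases j <;> simp [mul_apply, Fin.sum_univ_two]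

theorem transpose_X₂_mul_mul (Q : Matrix (Fin 2) (Fin 2) ℝ) :
    X₂ᵀ * Q * X₂ = !![Q 0 0, Q 0 0 + Q 0 1; Q 0 0 + Q 1 0, Q 0 0 + Q 1 0 + (Q 0 1 + Q 1 1)] := by
  ext i j
  fin_cases i <;> fin_cases j <;> simp [mul_apply, Fin.sum_univ_two]

theorem exists_move_of_not_isReduced {Q : Matrix (Fin 2) (Fin 2) ℝ} (hQ : Q.PosDef)
    (h01 : Q 0 1 < 0) (hred : ¬IsReduced Q) :
    ∃ X, IsMove X ∧ (Xᵀ * Q * X) 0 1 < 0 ∧ (Xᵀ * Q * X).trace ≤ Q.trace - Q.det / Q.trace := by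
  have hsymm : Q 1 0 = Q 0 1 := hQ.isHermitian.apply 0 1
  have h0 := hQ.det_div_trace_le_diag 0
  have h1 := hQ.det_div_trace_le_diag 1
  rw [trace_fin_two] at h0 h1 ⊢
  simp only [IsReduced, h01.le, true_and, not_and_or, not_le] at hred
  rcases hred with h | h
  · refine ⟨X₂, Or.inr rfl, ?_, ?_⟩ <;> simp only [transpose_X₂_mul_mul, of_apply, cons_val', cons_val_zero,
      cons_val_one, empty_val', cons_val_fin_one, trace_fin_two] <;> linarith
  · refine ⟨X₁, Or.inl rfl, ?_, ?_⟩ <;> simp only [transpose_X₁_mul_mul, of_apply, cons_val', cons_val_zero,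
      cons_val_one, empty_val', cons_val_fin_one, trace_fin_two] <;> linarith

theorem isReducible_of_posDef {Q : Matrix (Fin 2) (Fin 2) ℝ} (hQ : Q.PosDef) (h01 : Q 0 1 < 0) :
    IsReducible Q := by
  have hd : 0 < Q.det := hQ.det_pos
  have hε : 0 < Q.det / Q.trace := div_pos hd hQ.trace_pos
  suffices ∀ R : Matrix (Fin 2) (Fin 2) ℝ, R.PosDef → R 0 1 < 0 → R.det = Q.det →
      R.trace ≤ Q.trace → IsReducible R from this Q hQ h01 rfl le_rfl
  refine induction_of_decrease trace hε fun R ih hR hR01 hRdet hRtr => ?_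
  by_cases hred : IsReduced R
  · exact ⟨[], by simp, by simpa using hred⟩
  obtain ⟨X, hX, hX01, hXtr⟩ := exists_move_of_not_isReduced hR hR01 hred
  have hXR : (Xᵀ * R * X).PosDef := hR.transpose_mul_mul_of_isUnit_det (by simp [hX.det_eq_one])
  have hεR : Q.det / Q.trace ≤ R.det / R.trace := by
    rw [hRdet]
    exact div_le_div_of_nonneg_left hd.le hR.trace_pos hRtr
  refine hX.isReducible_of_conj (ih _ hXR.trace_pos.le (by linarith) hXR hX01 ?_ (by linarith))
  rw [det_transpose_mul_mul_of_det_eq_one hX.det_eq_one, hRdet]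

end Selling

/-- **Selling reduction in dimension 2.** Every real symmetric positive definite
`2 × 2` matrix `Q` with `q₁₂ < 0` can be transformed, by finitely many moves
`Q ↦ Xᵀ Q X` with `X ∈ {!![1,0;1,1], !![1,1;0,1]}`, into a matrix `Q'` with
`q'₁₂ ≤ 0`, `q'₁₁ + q'₁₂ ≥ 0` and `q'₂₂ + q'₁₂ ≥ 0`. -/
theorem selling_reduction_terminates (Q : Matrix (Fin 2) (Fin 2) ℝ)
    (hQ : Q.PosDef) (h12 : Q 0 1 < 0) :
    ∃ L : List (Matrix (Fin 2) (Fin 2) ℝ),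
      (∀ M ∈ L, M = !![(1 : ℝ), 0; 1, 1] ∨ M = !![(1 : ℝ), 1; 0, 1]) ∧
      ((L.prodᵀ * Q * L.prod) 0 1 ≤ 0 ∧
        0 ≤ (L.prodᵀ * Q * L.prod) 0 0 + (L.prodᵀ * Q * L.prod) 0 1 ∧
        0 ≤ (L.prodᵀ * Q * L.prod) 1 1 + (L.prodᵀ * Q * L.prod) 0 1) :=
  Selling.isReducible_of_posDef hQ h12
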